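/- Let (a_n) be an arithmetic sequence and let x = Σ_{j} 1/a_{s_j+1} where supp(x) = {s_j + 1 : j ∈ ℕ} with b_{s_j+1} → ∞ (so supp(x) is b-divergent) and all digits c_n equal 1 on the support. If the union of intervals ⋃_j [n_{s_j}, n_{s_j} + b_{s_j+1} − 2] (in the indexing of (d_n) with a_k = d_{n_k}) has positive upper density, then x ∈ t_{(a_n)}(T) but x ∉ t^s_{(d_n)}(T). -/

import Mathlib

open Filter Topology

/-- Number of elements of `A` below `n`. -/
noncomputable def densCount (A : Set ℕ) (n : ℕ) : ℕ := Nat.card ↥(A ∩ Set.Iio n)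

/-- `A ⊆ ℕ` has natural density `δ`. -/
def HasDensity (A : Set ℕ) (δ : ℝ) : Prop :=
  Tendsto (fun n => (densCount A n : ℝ) / n) atTop (𝓝 δ)

/-- Upper natural density of `A ⊆ ℕ`. -/
noncomputable def upperDensity (A : Set ℕ) : ℝ :=
  Filter.limsup (fun n => (densCount A n : ℝ) / n) atTop

/-- A sequence in the circle `ℝ/ℤ` converges statistically to `0`. -/
def StatTendstoZero (x : ℕ → AddCircle (1:ℝ)) : Prop :=
  ∀ ε : ℝ, 0 < ε → HasDensity {n | ε ≤ ‖x n‖} 0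

/-- The statistically characterized subset `t^s_{(a_n)}(𝕋)`. -/
def sChar (a : ℕ → ℤ) : Set (AddCircle (1:ℝ)) :=
  {x | StatTendstoZero (fun n => a n • x)}

/-- The characterized subset `t_{(a_n)}(𝕋)`. -/
def charSet (a : ℕ → ℤ) : Set (AddCircle (1:ℝ)) :=
  {x | Tendsto (fun n => a n • x) atTop (𝓝 0)}

/-- `(a_n)` is an arithmetic sequence. -/
def IsArithSeq (a : ℕ → ℕ) : Prop :=
  a 0 = 1 ∧ StrictMono a ∧ ∀ n, a n ∣ a (n + 1)

/-- `d` is the increasing enumeration of `{r·a_k : 1 ≤ r < b_{k+1}}`. -/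
def IsDSeq (a d : ℕ → ℕ) : Prop :=
  StrictMono d ∧
    Set.range d = {m : ℕ | ∃ k r : ℕ, 1 ≤ r ∧ r < a (k + 1) / a k ∧ m = r * a k}


/-!
Write `x = ∑ 1 / c_j` with `c_j = a_{s_j + 1}`. Since `c_{j+1} ≥ 2 c_j`, the tail of the series
from index `j` is at most `2 / c_j`, and multiplying by a common multiple of `c_0, …, c_{j-1}`
kills the head modulo `1`. For `s_j < n ≤ s_{j+1}` this gives
`‖a_n x‖ ≤ a_n · 2 / c_{j+1} ≤ 2 / b_{s_{j+1}+1} → 0`.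

In the `d`-indexing the block `[n_{s_j}, n_{s_j + 1})` enumerates `r a_{s_j}` for
`1 ≤ r < b = b_{s_j + 1}`, and `r a_{s_j} x ≡ r / b + θ` with `0 ≤ θ ≤ 2 / b_{s_{j+1}+1}`. Once the
`b`'s exceed `16`, every `r` with `b / 8 ≤ r ≤ 3b / 4` gives `‖d_n x‖ ≥ 1 / 8`, i.e. a quarter of
every late block lies in `{n : ‖d_n x‖ ≥ 1/8}`. A set of density zero cannot fill a fixed fraction
of every late block of a union of blocks with positive upper density: at block ends the counting
functions are comparable, and inside a block (or a gap) the relative count of the union is at most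
its value at the end of that block.
-/

lemma norm_coe_le_abs (y : ℝ) : ‖(y : AddCircle (1 : ℝ))‖ ≤ |y| :=
  QuotientAddGroup.norm_mk_le_norm

lemma le_norm_coe_of_le_of_le {δ y : ℝ} (h₁ : δ ≤ y) (h₂ : y ≤ 1 - δ) :
    δ ≤ ‖(y : AddCircle (1 : ℝ))‖ := by
  rw [UnitAddCircle.norm_eq]
  rcases le_or_gt (round y) 0 with h | h
  · have : (round y : ℝ) ≤ 0 := by exact_mod_cast h
    exact le_abs.2 (Or.inl (by linarith))
  · have : (1 : ℝ) ≤ round y := by exact_mod_cast h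
    exact le_abs.2 (Or.inr (by linarith))

section Lacunary

variable {c : ℕ → ℕ}

lemma two_pow_mul_le_of_two_mul_le (hc : ∀ j, 2 * c j ≤ c (j + 1)) (i j : ℕ) :
    2 ^ i * c j ≤ c (i + j) := by
  induction i with
  | zero => simp
  | succ i ih =>
    calc 2 ^ (i + 1) * c j = 2 * (2 ^ i * c j) := by ring
      _ ≤ 2 * c (i + j) := by omega
      _ ≤ c (i + 1 + j) := by rw [Nat.add_right_comm]; exact hc _

variable (hc₀ : 0 < c 0) (hc : ∀ j, 2 * c j ≤ c (j + 1))
include hc₀ hc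

lemma pos_of_two_mul_le (j : ℕ) : 0 < c j := by
  simpa using (Nat.mul_pos (by positivity) hc₀).trans_le (two_pow_mul_le_of_two_mul_le hc j 0)

lemma one_div_le_geometric (i j : ℕ) :
    (1 : ℝ) / c (i + j) ≤ (1 / 2) ^ i * (1 / c j) := by
  have hj : (0 : ℝ) < c j := by exact_mod_cast pos_of_two_mul_le hc₀ hc j
  have hle : (2 : ℝ) ^ i * c j ≤ c (i + j) := by
    exact_mod_cast two_pow_mul_le_of_two_mul_le hc i j
  calc (1 : ℝ) / c (i + j) ≤ 1 / (2 ^ i * c j) := one_div_le_one_div_of_le (by positivity) hle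
    _ = (1 / 2) ^ i * (1 / c j) := by rw [div_pow, one_pow, one_div_mul_one_div]

lemma summable_one_div_of_two_mul_le : Summable fun j => (1 : ℝ) / c j := by
  refine (summable_geometric_two.mul_right (1 / (c 0 : ℝ))).of_nonneg_of_le (fun _ => by positivity)
    fun j => ?_
  simpa using one_div_le_geometric hc₀ hc j 0

lemma tsum_one_div_add_le (j : ℕ) : ∑' i, (1 : ℝ) / c (i + j) ≤ 2 / c j := by
  calc ∑' i, (1 : ℝ) / c (i + j) ≤ ∑' i, (1 / 2 : ℝ) ^ i * (1 / c j) :=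
        ((summable_nat_add_iff j).2 (summable_one_div_of_two_mul_le hc₀ hc)).tsum_le_tsum
          (one_div_le_geometric hc₀ hc · j) (summable_geometric_two.mul_right _)
    _ = 2 / c j := by rw [tsum_mul_right, tsum_geometric_two, mul_one_div]

lemma zsmul_coe_tsum_one_div (m j : ℕ) (hm : ∀ i < j, c i ∣ m) :
    (m : ℤ) • ((∑' i, (1 : ℝ) / c i : ℝ) : AddCircle (1 : ℝ)) =
      ((m * ∑' i, (1 : ℝ) / c (i + j) : ℝ) : AddCircle (1 : ℝ)) := by
  have hhead : (m : ℝ) * ∑ i ∈ Finset.range j, (1 : ℝ) / c i =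
      ((∑ i ∈ Finset.range j, m / c i : ℕ) : ℝ) := by
    rw [Finset.mul_sum, Nat.cast_sum]
    refine Finset.sum_congr rfl fun i hi => ?_
    have hci : (c i : ℝ) ≠ 0 := by exact_mod_cast (pos_of_two_mul_le hc₀ hc i).ne'
    rw [Nat.cast_div (hm i (Finset.mem_range.1 hi)) hci]
    ring
  have hint : (((∑ i ∈ Finset.range j, m / c i : ℕ) : ℝ) : AddCircle (1 : ℝ)) = 0 :=
    (AddCircle.coe_eq_zero_iff 1).2
      ⟨(∑ i ∈ Finset.range j, m / c i : ℕ), by rw [zsmul_one, Int.cast_natCast]⟩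
  rw [natCast_zsmul, ← AddCircle.coe_nsmul, nsmul_eq_mul,
    ← (summable_one_div_of_two_mul_le hc₀ hc).sum_add_tsum_nat_add j, mul_add, hhead,
    AddCircle.coe_add, hint, zero_add]

end Lacunary

namespace IsArithSeq

variable {a : ℕ → ℕ} (ha : IsArithSeq a)
include ha

lemma pos (n : ℕ) : 0 < a n :=
  Nat.one_pos.trans_le (ha.1 ▸ ha.2.1.monotone (Nat.zero_le n))

lemma dvd_of_le {i j : ℕ} (h : i ≤ j) : a i ∣ a j := by
  induction j, h using Nat.le_induction with
  | base => exact dvd_rfl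
  | succ j _ ih => exact ih.trans (ha.2.2 j)

lemma div_mul_cancel (k : ℕ) : a (k + 1) / a k * a k = a (k + 1) :=
  Nat.div_mul_cancel (ha.2.2 k)

lemma two_le_div (k : ℕ) : 2 ≤ a (k + 1) / a k := by
  have hlt : 1 * a k < a (k + 1) / a k * a k := by
    rw [one_mul, ha.div_mul_cancel]; exact ha.2.1 k.lt_succ_self
  have := Nat.lt_of_mul_lt_mul_right hlt
  omega

lemma two_mul_le (k : ℕ) : 2 * a k ≤ a (k + 1) := by
  rw [← ha.div_mul_cancel k]
  exact Nat.mul_le_mul_right _ (ha.two_le_div k)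

lemma cast_div (k : ℕ) : ((a (k + 1) / a k : ℕ) : ℝ) = a (k + 1) / a k :=
  Nat.cast_div (ha.2.2 k) (by exact_mod_cast (ha.pos k).ne')

lemma two_mul_le_comp_add_one {s : ℕ → ℕ} (hs : StrictMono s) (j : ℕ) :
    2 * a (s j + 1) ≤ a (s (j + 1) + 1) :=
  (ha.two_mul_le _).trans (ha.2.1.monotone (by have := hs (Nat.lt_add_one j); omega))

end IsArithSeq

namespace IsDSeq

variable {a d nk : ℕ → ℕ} (ha : IsArithSeq a) (hd : IsDSeq a d)
include ha hd

lemma mul_mem_range (hnk : ∀ k, d (nk k) = a k) {k t : ℕ} (ht₁ : 1 ≤ t)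
    (ht : t ≤ a (k + 1) / a k) : t * a k ∈ Set.range d := by
  rcases ht.lt_or_eq with ht | rfl
  · rw [hd.2]; exact ⟨k, t, ht₁, ht, rfl⟩
  · exact ⟨nk (k + 1), by rw [hnk, ha.div_mul_cancel]⟩

lemma eq_succ_mul_of_mem_range {k t v : ℕ} (hv : v ∈ Set.range d) (ht₁ : 1 ≤ t)
    (ht : t + 1 ≤ a (k + 1) / a k) (hlo : t * a k < v) (hhi : v ≤ (t + 1) * a k) :
    v = (t + 1) * a k := by
  rw [hd.2] at hv
  obtain ⟨k', r, hr₁, hr, rfl⟩ := hv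
  have hk : r * a k' < a (k' + 1) := by
    rw [← ha.div_mul_cancel k']; exact Nat.mul_lt_mul_of_pos_right hr (ha.pos k')
  rcases lt_trichotomy k' k with h | rfl | h
  · have : a (k' + 1) ≤ a k := ha.2.1.monotone h
    nlinarith
  · have h₁ := Nat.lt_of_mul_lt_mul_right hlo
    have h₂ := Nat.le_of_mul_le_mul_right hhi (ha.pos k')
    rw [show r = t + 1 by omega]
  · have h₁ : a (k + 1) ≤ a k' := ha.2.1.monotone h
    have h₂ : a k' ≤ r * a k' := Nat.le_mul_of_pos_left _ hr₁
    have h₃ : (t + 1) * a k ≤ a (k + 1) := by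
      rw [← ha.div_mul_cancel k]; exact Nat.mul_le_mul_right _ ht
    omega

lemma apply_add (hnk : ∀ k, d (nk k) = a k) {k i : ℕ} (hi : i + 1 ≤ a (k + 1) / a k) :
    d (nk k + i) = (i + 1) * a k := by
  induction i with
  | zero => simp [hnk]
  | succ i ih =>
    have ih := ih (by omega)
    obtain ⟨m, hm⟩ := mul_mem_range ha hd hnk (k := k) (t := i + 2) (by omega) hi
    have hlt : d (nk k + i) < d m := by
      rw [ih, hm]; exact Nat.mul_lt_mul_of_pos_right (by omega) (ha.pos k)
    have hle : d (nk k + (i + 1)) ≤ d m := hd.1.monotone (hd.1.lt_iff_lt.1 hlt)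
    refine eq_succ_mul_of_mem_range ha hd ⟨_, rfl⟩ (by omega) hi ?_ (hm ▸ hle)
    rw [← ih]; exact hd.1 (by omega)

lemma nk_succ (hnk : ∀ k, d (nk k) = a k) (k : ℕ) :
    nk (k + 1) = nk k + (a (k + 1) / a k - 1) := by
  have h2 := ha.two_le_div k
  refine hd.1.injective ?_
  rw [apply_add ha hd hnk (by omega), hnk, Nat.sub_add_cancel (by omega), ha.div_mul_cancel]

lemma nk_strictMono (hnk : ∀ k, d (nk k) = a k) : StrictMono nk := fun i j h =>
  hd.1.lt_iff_lt.1 (by rw [hnk, hnk]; exact ha.2.1 h)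

end IsDSeq

section Counting

lemma densCount_eq_count (A : Set ℕ) [DecidablePred (· ∈ A)] (n : ℕ) :
    densCount A n = Nat.count (· ∈ A) n := by
  rw [Nat.count_eq_card_filter_range, ← Nat.card_eq_finsetCard, densCount]
  exact Nat.card_congr (Equiv.subtypeEquivRight fun k => by simp [and_comm])

lemma densCount_le (A : Set ℕ) (n : ℕ) : densCount A n ≤ n := by
  classical
  rw [densCount_eq_count]; exact Nat.count_le _

lemma densCount_mono (A : Set ℕ) : Monotone (densCount A) := by
  classical
  intro m n h
  simp only [densCount_eq_count]
  exact Nat.count_monotone _ h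

lemma densCount_add_of_Ico_subset {A : Set ℕ} {p q : ℕ} (hpq : p ≤ q) (h : Set.Ico p q ⊆ A) :
    densCount A q = densCount A p + (q - p) := by
  classical
  obtain ⟨t, rfl⟩ := Nat.exists_eq_add_of_le hpq
  rw [densCount_eq_count, densCount_eq_count, Nat.count_add, Nat.add_sub_cancel_left,
    (Nat.count_iff_forall (n := t)).2 fun k hk => h ⟨by omega, by omega⟩]

lemma densCount_eq_of_disjoint {A : Set ℕ} {p q : ℕ} (hpq : p ≤ q)
    (h : Disjoint (Set.Ico p q) A) : densCount A q = densCount A p := by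
  classical
  obtain ⟨t, rfl⟩ := Nat.exists_eq_add_of_le hpq
  rw [densCount_eq_count, densCount_eq_count, Nat.count_add,
    (Nat.count_iff_forall_not (n := t)).2 fun k hk => h.notMem_of_mem_left ⟨by omega, by omega⟩,
    add_zero]

lemma densCount_div_le_of_Ico_subset {A : Set ℕ} {m n : ℕ} (hmn : m ≤ n)
    (h : Set.Ico m n ⊆ A) : (densCount A m : ℝ) / m ≤ densCount A n / n := by
  rcases m.eq_zero_or_pos with rfl | hm
  · simp only [CharP.cast_eq_zero, div_zero]; positivity
  have hle : (densCount A m : ℝ) ≤ m := by exact_mod_cast densCount_le A m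
  have hmn' : (m : ℝ) ≤ n := by exact_mod_cast hmn
  have hn : (0 : ℝ) < n := by exact_mod_cast hm.trans_le hmn
  rw [densCount_add_of_Ico_subset hmn h, div_le_div_iff₀ (by positivity) hn]
  push_cast [hmn]
  nlinarith [mul_nonneg (sub_nonneg.2 hmn') (sub_nonneg.2 hle)]

lemma densCount_div_le_of_disjoint {A : Set ℕ} {m n : ℕ} (hmn : m ≤ n)
    (h : Disjoint (Set.Ico m n) A) : (densCount A n : ℝ) / n ≤ densCount A m / m := by
  rw [densCount_eq_of_disjoint hmn h]
  rcases m.eq_zero_or_pos with rfl | hm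
  · rw [Nat.le_zero.1 (densCount_le A 0), Nat.cast_zero, zero_div, zero_div]
  exact div_le_div_of_nonneg_left (by positivity) (by positivity) (by exact_mod_cast hmn)

end Counting

lemma tendsto_zero_of_le_of_mem_Ioc {A : ℕ → ℕ} (hA : StrictMono A) {f g : ℕ → ℝ}
    (hf : ∀ n, 0 ≤ f n) (hg : Tendsto g atTop (𝓝 0))
    (hfg : ∀ j n, A j < n → n ≤ A (j + 1) → f n ≤ g j) : Tendsto f atTop (𝓝 0) := by
  have hex : ∀ n, ∃ j, n ≤ A (j + 1) := fun n => ⟨n, (hA.id_le n).trans (hA.monotone n.le_succ)⟩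
  classical
  -- for `n > A 0`, `J n` is the index with `A (J n) < n ≤ A (J n + 1)`
  let J : ℕ → ℕ := fun n => Nat.find (hex n)
  have hJ_spec (n : ℕ) : n ≤ A (J n + 1) := Nat.find_spec (hex n)
  have hJ_min (n j : ℕ) (h : j < J n) : A (j + 1) < n := lt_of_not_ge (Nat.find_min (hex n) h)
  have hJ : Tendsto J atTop atTop := tendsto_atTop_atTop.2 fun i => ⟨A i + 1, fun n hn => by
    by_contra! h
    have := hA.monotone (show J n + 1 ≤ i by omega)
    have := hJ_spec n
    omega⟩
  refine squeeze_zero' (.of_forall hf) ?_ (hg.comp hJ)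
  filter_upwards [eventually_gt_atTop (A 0)] with n hn
  refine hfg _ n ?_ (hJ_spec n)
  rcases hj : J n with _ | j
  · exact hn
  · exact hJ_min n j (by omega)

section Blocks

variable {A B : ℕ → ℕ} (hAB : ∀ j, A j < B j) (hBA : ∀ j, B j ≤ A (j + 1))
include hAB hBA

lemma strictMono_left_of_blocks : StrictMono A :=
  strictMono_nat_of_lt_succ fun j => (hAB j).trans_le (hBA j)

lemma strictMono_right_of_blocks : StrictMono B :=
  strictMono_nat_of_lt_succ fun j => (hBA j).trans_lt (hAB (j + 1))

lemma disjoint_Ico_iUnion_Ico (j : ℕ) :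
    Disjoint (Set.Ico (B j) (A (j + 1))) (⋃ i, Set.Ico (A i) (B i)) := by
  refine Set.disjoint_iUnion_right.2 fun i => Set.Ico_disjoint_Ico.2 ?_
  rcases le_or_gt i j with h | h
  · exact (min_le_right _ _).trans
      (((strictMono_right_of_blocks hAB hBA).monotone h).trans (le_max_left _ _))
  · exact (min_le_left _ _).trans
      (((strictMono_left_of_blocks hAB hBA).monotone h).trans (le_max_right _ _))

lemma densCount_iUnion_Ico_div_le {j n : ℕ} (hjn : A j < n) (hnj : n ≤ A (j + 1)) :
    (densCount (⋃ i, Set.Ico (A i) (B i)) n : ℝ) / n ≤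
      densCount (⋃ i, Set.Ico (A i) (B i)) (B j) / B j := by
  rcases le_or_gt n (B j) with h | h
  · exact densCount_div_le_of_Ico_subset h fun v hv =>
      Set.mem_iUnion.2 ⟨j, hjn.le.trans hv.1, hv.2⟩
  · exact densCount_div_le_of_disjoint h.le
      ((disjoint_Ico_iUnion_Ico hAB hBA j).mono_left (Set.Ico_subset_Ico_right hnj))

lemma densCount_iUnion_Ico_le {S : Set ℕ} {K J : ℕ}
    (hS : ∀ j ≥ J, B j - A j + K * densCount S (A j) ≤ K * densCount S (B j)) {j : ℕ}
    (hj : J ≤ j) :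
    densCount (⋃ i, Set.Ico (A i) (B i)) (B j) ≤
      densCount (⋃ i, Set.Ico (A i) (B i)) (A J) + K * densCount S (B j) := by
  have hblock (i : ℕ) := densCount_add_of_Ico_subset (hAB i).le
    (Set.subset_iUnion (fun i => Set.Ico (A i) (B i)) i)
  induction j, hj using Nat.le_induction with
  | base => have := hS J le_rfl; rw [hblock]; omega
  | succ j hj ih =>
    have hgap := densCount_eq_of_disjoint (hBA j) (disjoint_Ico_iUnion_Ico hAB hBA j)
    have hmono : K * densCount S (B j) ≤ K * densCount S (A (j + 1)) :=
      Nat.mul_le_mul_left K (densCount_mono S (hBA j))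
    have := hS (j + 1) (by omega)
    rw [hblock, hgap]
    omega

theorem hasDensity_iUnion_Ico_zero {S : Set ℕ} (hS : HasDensity S 0) (K J : ℕ)
    (hgood : ∀ j ≥ J, B j - A j + K * densCount S (A j) ≤ K * densCount S (B j)) :
    HasDensity (⋃ j, Set.Ico (A j) (B j)) 0 := by
  set U := ⋃ j, Set.Ico (A j) (B j)
  have hB := (strictMono_right_of_blocks hAB hBA).tendsto_atTop
  have hbound : Tendsto (fun j => (densCount U (A J) : ℝ) / B j +
      K * ((densCount S (B j) : ℝ) / B j)) atTop (𝓝 0) := by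
    simpa using (tendsto_const_nhds.div_atTop (tendsto_natCast_atTop_atTop.comp hB)).add
      ((hS.comp hB).const_mul (K : ℝ))
  have hg : Tendsto (fun j => (densCount U (B j) : ℝ) / B j) atTop (𝓝 0) := by
    refine squeeze_zero' (.of_forall fun _ => by positivity) ?_ hbound
    filter_upwards [eventually_ge_atTop J] with j hj
    rw [mul_div_assoc', ← add_div]
    gcongr
    exact_mod_cast densCount_iUnion_Ico_le hAB hBA hgood hj
  exact tendsto_zero_of_le_of_mem_Ioc (strictMono_left_of_blocks hAB hBA)
    (fun _ => by positivity) hg fun j n => densCount_iUnion_Ico_div_le hAB hBA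

end Blocks

section Series

variable {a s : ℕ → ℕ} (ha : IsArithSeq a) (hs : StrictMono s)
include ha hs

lemma mul_tsum_tail_le {m K : ℕ} (hm : m ≤ a (s K)) :
    (m : ℝ) * ∑' i, (1 : ℝ) / a (s (i + K) + 1) ≤ 2 / (a (s K + 1) / a (s K) : ℕ) := by
  have htail := tsum_one_div_add_le (c := fun j => a (s j + 1)) (ha.pos _)
    (ha.two_mul_le_comp_add_one hs) K
  have hpos : (0 : ℝ) < a (s K + 1) := by exact_mod_cast ha.pos _
  calc (m : ℝ) * ∑' i, (1 : ℝ) / a (s (i + K) + 1) ≤ a (s K) * (2 / a (s K + 1)) :=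
        mul_le_mul (by exact_mod_cast hm) htail (tsum_nonneg fun _ => by positivity)
          (by positivity)
    _ = 2 / (a (s K + 1) / a (s K) : ℕ) := by
        rw [ha.cast_div]; field_simp

lemma norm_zsmul_tsum_le {j n : ℕ} (hjn : s j < n) (hnj : n ≤ s (j + 1)) :
    ‖(a n : ℤ) • ((∑' i, (1 : ℝ) / a (s i + 1) : ℝ) : AddCircle (1 : ℝ))‖ ≤
      2 / (a (s (j + 1) + 1) / a (s (j + 1)) : ℕ) := by
  rw [zsmul_coe_tsum_one_div (c := fun i => a (s i + 1)) (ha.pos _) (ha.two_mul_le_comp_add_one hs)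
    (a n) (j + 1) fun i hi => ha.dvd_of_le (by have := hs.monotone (Nat.lt_succ_iff.1 hi); omega)]
  refine (norm_coe_le_abs _).trans ?_
  rw [abs_of_nonneg (mul_nonneg (Nat.cast_nonneg _) (tsum_nonneg fun _ => by positivity))]
  exact mul_tsum_tail_le ha hs (ha.2.1.monotone hnj)

/-- Modulo `1`, `r a_{s_j} x` is `r / b_{s_j + 1}` plus a nonnegative tail of size at most
`2 / b_{s_{j+1} + 1}`. -/
lemma one_div_eight_le_norm_zsmul_tsum {j r : ℕ} (hr₁ : a (s j + 1) / a (s j) ≤ 8 * r)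
    (hr₂ : 4 * r ≤ 3 * (a (s j + 1) / a (s j)))
    (h16 : 16 ≤ a (s (j + 1) + 1) / a (s (j + 1))) :
    1 / 8 ≤
      ‖((r * a (s j) : ℕ) : ℤ) • ((∑' i, (1 : ℝ) / a (s i + 1) : ℝ) : AddCircle (1 : ℝ))‖ := by
  have hc₀ : 0 < a (s 0 + 1) := ha.pos _
  have hc := ha.two_mul_le_comp_add_one hs
  rw [zsmul_coe_tsum_one_div (c := fun i => a (s i + 1)) hc₀ hc (r * a (s j)) j
    fun i hi => (ha.dvd_of_le (by have := hs hi; omega)).mul_left r]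
  have hsplit : ∑' i, (1 : ℝ) / a (s (i + j) + 1) =
      1 / a (s j + 1) + ∑' i, (1 : ℝ) / a (s (i + (j + 1)) + 1) := by
    rw [((summable_nat_add_iff j).2 (summable_one_div_of_two_mul_le hc₀ hc)).tsum_eq_zero_add]
    simp only [zero_add, Nat.add_right_comm _ 1 j]
    rfl
  have hb₂ := ha.two_le_div (s j)
  set b := a (s j + 1) / a (s j)
  have hb : (0 : ℝ) < b := by exact_mod_cast (by omega : 0 < b)
  have hhead : ((r * a (s j) : ℕ) : ℝ) * (1 / a (s j + 1)) = r / b := by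
    have := (ha.pos (s j)).ne'
    rw [ha.cast_div]; push_cast; field_simp
  have htail := mul_tsum_tail_le ha hs (m := r * a (s j)) (K := j + 1) <| by
    calc r * a (s j) ≤ b * a (s j) := Nat.mul_le_mul_right _ (by omega)
      _ = a (s j + 1) := ha.div_mul_cancel _
      _ ≤ a (s (j + 1)) := ha.2.1.monotone (hs (Nat.lt_add_one j))
  have h16' : (2 : ℝ) / (a (s (j + 1) + 1) / a (s (j + 1)) : ℕ) ≤ 1 / 8 := by
    rw [div_le_div_iff₀ (by exact_mod_cast (by omega : 0 < a (s (j + 1) + 1) / a (s (j + 1))))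
      (by norm_num)]
    exact_mod_cast (by omega : 2 * 8 ≤ 1 * (a (s (j + 1) + 1) / a (s (j + 1))))
  have hr₁' : (1 : ℝ) / 8 ≤ r / b := by
    rw [div_le_div_iff₀ (by norm_num) hb]; exact_mod_cast (by omega : 1 * b ≤ r * 8)
  have hr₂' : (r : ℝ) / b ≤ 3 / 4 := by
    rw [div_le_div_iff₀ hb (by norm_num)]; exact_mod_cast (by omega : r * 4 ≤ 3 * b)
  have htail_nonneg : 0 ≤ ((r * a (s j) : ℕ) : ℝ) * ∑' i, (1 : ℝ) / a (s (i + (j + 1)) + 1) :=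
    mul_nonneg (Nat.cast_nonneg _) (tsum_nonneg fun _ => by positivity)
  apply le_norm_coe_of_le_of_le <;> rw [hsplit, mul_add, hhead] <;> linarith

end Series

lemma sub_add_four_mul_densCount_le {a d nk s : ℕ → ℕ} (ha : IsArithSeq a) (hd : IsDSeq a d)
    (hnk : ∀ k, d (nk k) = a k) (hs : StrictMono s) {S : Set ℕ}
    (hS : {n | 1 / 8 ≤ ‖(d n : ℤ) • ((∑' i, (1 : ℝ) / a (s i + 1) : ℝ) : AddCircle (1 : ℝ))‖} ⊆ S)
    {j : ℕ} (h16 : 16 ≤ a (s j + 1) / a (s j)) (h16' : 16 ≤ a (s (j + 1) + 1) / a (s (j + 1))) :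
    nk (s j + 1) - nk (s j) + 4 * densCount S (nk (s j)) ≤ 4 * densCount S (nk (s j + 1)) := by
  have hB := IsDSeq.nk_succ ha hd hnk (s j)
  set b := a (s j + 1) / a (s j)
  set A := nk (s j)
  -- the positions `A + i` with `b / 4 ≤ i + 1 ≤ 3 (b / 4)` carry `d = (i + 1) a_{s_j}` with
  -- `b / 8 ≤ i + 1 ≤ 3b / 4`, and there are more than `(b - 1) / 4` of them
  have hsub : Set.Ico (A + (b / 4 - 1)) (A + 3 * (b / 4)) ⊆ S := by
    rintro n ⟨h₁, h₂⟩
    obtain ⟨i, rfl⟩ := Nat.exists_eq_add_of_le (show A ≤ n by omega)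
    apply hS
    rw [Set.mem_ofPred_eq, IsDSeq.apply_add ha hd hnk (by omega)]
    exact one_div_eight_le_norm_zsmul_tsum ha hs (by omega) (by omega) h16'
  have hcount := densCount_add_of_Ico_subset (by omega) hsub
  have h₁ := densCount_mono S (show A ≤ A + (b / 4 - 1) by omega)
  have h₂ := densCount_mono S (show A + 3 * (b / 4) ≤ nk (s j + 1) by omega)
  omega

theorem stmt_11 (a d : ℕ → ℕ) (ha : IsArithSeq a) (hd : IsDSeq a d)
    (nk : ℕ → ℕ) (hnk : ∀ k, d (nk k) = a k)
    (s : ℕ → ℕ) (hs : StrictMono s)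
    (hbdiv : Tendsto (fun j => a (s j + 1) / a (s j)) atTop atTop)
    (hupp : 0 < upperDensity
      (⋃ j : ℕ, Set.Icc (nk (s j)) (nk (s j) + (a (s j + 1) / a (s j)) - 2))) :
    ((∑' j : ℕ, (1 : ℝ) / a (s j + 1) : ℝ) : AddCircle (1:ℝ)) ∈
        charSet (fun n => (a n : ℤ)) ∧
      ((∑' j : ℕ, (1 : ℝ) / a (s j + 1) : ℝ) : AddCircle (1:ℝ)) ∉
        sChar (fun n => (d n : ℤ)) := by
  refine ⟨?_, fun hx => ?_⟩
  · have hg : Tendsto (fun j => (2 : ℝ) / (a (s (j + 1) + 1) / a (s (j + 1)) : ℕ)) atTop (𝓝 0) :=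
      tendsto_const_nhds.div_atTop
        (tendsto_natCast_atTop_atTop.comp (hbdiv.comp (tendsto_add_atTop_nat 1)))
    exact tendsto_zero_iff_norm_tendsto_zero.2 <| tendsto_zero_of_le_of_mem_Ioc hs
      (fun _ => norm_nonneg _) hg fun j n => norm_zsmul_tsum_le ha hs
  · obtain ⟨J, hJ⟩ := eventually_atTop.1 (hbdiv.eventually_ge_atTop 16)
    have hnk_mono := IsDSeq.nk_strictMono ha hd hnk
    have hblocks := hasDensity_iUnion_Ico_zero (A := fun j => nk (s j))
      (B := fun j => nk (s j + 1)) (fun j => hnk_mono (Nat.lt_add_one _))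
      (fun j => hnk_mono.monotone (hs (Nat.lt_add_one j))) (hx (1 / 8) (by norm_num)) 4 J
      fun j hj => sub_add_four_mul_densCount_le ha hd hnk hs subset_rfl (hJ j hj)
        (hJ (j + 1) (by omega))
    have hU : ⋃ j, Set.Icc (nk (s j)) (nk (s j) + a (s j + 1) / a (s j) - 2) =
        ⋃ j, Set.Ico (nk (s j)) (nk (s j + 1)) := Set.iUnion_congr fun j => by
      have := ha.two_le_div (s j)
      ext n
      simp only [Set.mem_Icc, Set.mem_Ico, IsDSeq.nk_succ ha hd hnk]
      omega
    rw [upperDensity, hU, hblocks.limsup_eq] at hupp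
    exact lt_irrefl 0 hupp
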